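/- For every $n \geq 1$, the induced map $k_!(\partial\Delta^n) \to k_!(\Delta^n) = B\pi(\Delta^n)$ is a monomorphism of simplicial sets, and $k_!(\partial\Delta^n)$ is isomorphic to the union of the images of the maps $B\pi(\Delta^{n-1}) \to B\pi(\Delta^n)$ induced by the coface maps $d^i$. -/

import Mathlib

open CategoryTheory CategoryTheory.Limits Simplicial Opposite

/-- The chaotic (indiscrete) category on a type: exactly one morphism between
any two objects. -/
def Chaotic (α : Type) : Type := α

instance {α : Type} : Category (Chaotic α) where
  Hom _ _ := Unit
  id _ := ⟨⟩
  comp _ _ := ⟨⟩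

/-- Any function induces a functor between chaotic categories. -/
def chaoticMap {α β : Type} (f : α → β) : Chaotic α ⥤ Chaotic β where
  obj := f
  map _ := ⟨⟩

instance {α : Type} (a b : Chaotic α) : Subsingleton (a ⟶ b) :=
  inferInstanceAs (Subsingleton Unit)

lemma chaoticFunctor_ext {α : Type} {C : Type} [Category C] (F G : C ⥤ Chaotic α)
    (h : ∀ X, F.obj X = G.obj X) : F = G :=
  CategoryTheory.Functor.ext h (fun _ _ _ => Subsingleton.elim _ _)

/-- The chaotic categories, as a cosimplicial category. -/
def chaoticCosimplicial : SimplexCategory ⥤ Cat where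
  obj n := Cat.of (Chaotic (Fin (n.len + 1)))
  map f := (chaoticMap f.toOrderHom).toCatHom
  map_id n := Cat.Hom.ext (chaoticFunctor_ext _ _ (fun _ => rfl))
  map_comp f g := Cat.Hom.ext (chaoticFunctor_ext _ _ (fun _ => rfl))

/-- The cosimplicial simplicial set `[n] ↦ B π (Δⁿ)`, the nerve of the chaotic
groupoid on `n + 1` objects (the nerve of the fundamental groupoid of `Δⁿ`). -/
def Bpi : SimplexCategory ⥤ SSet := chaoticCosimplicial ⋙ nerveFunctor

lemma chaoticCA_ext {k m : ℕ} (F G : ComposableArrows (Chaotic (Fin (k + 1))) m)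
    (h : ∀ i, F.obj i = G.obj i) : F = G :=
  CategoryTheory.Functor.ext h (fun _ _ _ => Subsingleton.elim _ _)

/-- The simplex of `B π (Δⁿ)` corresponding to a simplex of `Δⁿ`. -/
def simplexToChaotic {n : SimplexCategory} {m : SimplexCategoryᵒᵖ}
    (x : (SSet.stdSimplex.obj n).obj m) : (Bpi.obj n).obj m where
  obj i := (SSet.stdSimplex.objEquiv (n := n) (m := m) x).toOrderHom i
  map _ := ⟨⟩
  map_id _ := rfl
  map_comp _ _ := rfl

lemma Bpi_obj_map_obj {n : SimplexCategory} {m m' : SimplexCategoryᵒᵖ} (g : m ⟶ m')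
    (x : (Bpi.obj n).obj m) (i : Fin (m'.unop.len + 1)) :
    ((Bpi.obj n).map g x).obj i = x.obj (g.unop.toOrderHom i) := rfl

lemma Bpi_map_app_obj {a b : SimplexCategory} (f : a ⟶ b) {m : SimplexCategoryᵒᵖ}
    (x : (Bpi.obj a).obj m) (i : Fin (m.unop.len + 1)) :
    (((Bpi.map f).app m) x).obj i = f.toOrderHom (x.obj i) := rfl

/-- The natural inclusion `Δⁿ → B π (Δⁿ)`. -/
def stdToBpi : SSet.stdSimplex ⟶ Bpi where
  app n :=
    { app := fun _ => TypeCat.ofHom fun x => simplexToChaotic x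
      naturality := fun m m' g => by
        ext x
        apply chaoticCA_ext
        intro i
        rfl }
  naturality a b f := by
    apply NatTrans.ext; funext m; ext x
    apply chaoticCA_ext
    intro i
    rfl

/-- The fundamental `n`-simplex of `B π (Δⁿ)` (the string of arrows `0 → 1 → ⋯ → n`). -/
def spineEl (n : SimplexCategory) : (Bpi.obj n).obj (op n) where
  obj i := i
  map _ := ⟨⟩
  map_id _ := rfl
  map_comp _ _ := rfl

lemma spineEl_natural {a b : SimplexCategory} (f : a ⟶ b) :
    ((Bpi.map f).app (op a)) (spineEl a) = (Bpi.obj b).map f.op (spineEl b) := by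
  apply chaoticCA_ext
  intro i
  rfl

/-- The functor `k^!`, with `k^!(X)_n = Hom(Bπ(Δⁿ), X)`. -/
def kSh (X : SSet) : SSet where
  obj n := Bpi.obj n.unop ⟶ X
  map f := TypeCat.ofHom fun g => Bpi.map f.unop ≫ g
  map_id n := by ext g; simp
  map_comp f g := by ext h; simp

/-- `k^!` as a functor. -/
def kShF : SSet ⥤ SSet where
  obj := kSh
  map q := { app := fun _ => TypeCat.ofHom fun g => g ≫ q
             naturality := fun _ _ f => by ext g; exact Category.assoc (Bpi.map f.unop) g q }

/-- The canonical map `k^!(X) ⟶ X` induced by the inclusions `Δⁿ ⊆ Bπ(Δⁿ)`. -/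
def kCan (X : SSet) : kSh X ⟶ X where
  app n := TypeCat.ofHom fun g => g.app n (spineEl n.unop)
  naturality n n' f := by
    ext g
    exact (congr_arg (g.app n') (spineEl_natural f.unop)).trans
      (NatTrans.naturality_apply g f (spineEl n.unop))

/-- An edge of a simplicial set is invertible if its classifying map extends along
`Δ¹ ⊆ Bπ(Δ¹)` (for a quasi-category this says precisely that the edge is invertible
in the homotopy category). -/
def invEdge (X : SSet) (e : X.obj (op (SimplexCategory.mk 1))) : Prop :=
  ∃ g : Bpi.obj (SimplexCategory.mk 1) ⟶ X,
    g.app (op (SimplexCategory.mk 1)) (spineEl (SimplexCategory.mk 1)) = e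

/-- The subcomplex `J(X) ⊆ X` of simplices all of whose edges are invertible;
for a quasi-category `X` this is the maximal Kan subcomplex. -/
def Jmax (X : SSet) : SSet where
  obj m := { x : X.obj m // ∀ f : SimplexCategory.mk 1 ⟶ m.unop, invEdge X (X.map f.op x) }
  map {m m'} g := TypeCat.ofHom fun x => ⟨X.map g x.1, fun f => by
    have h : X.map f.op (X.map g x.1) = X.map ((f ≫ g.unop).op) x.1 := by
      rw [op_comp, Quiver.Hom.op_unop, FunctorToTypes.map_comp_apply]
    rw [h]
    exact x.2 (f ≫ g.unop)⟩
  map_id m := by ext x; simp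
  map_comp f g := by ext x; simp

/-- The inclusion `J(X) ⊆ X`. -/
def Jincl (X : SSet) : Jmax X ⟶ X where
  app _ := TypeCat.ofHom fun x => x.1
  naturality _ _ _ := rfl

/-- Functoriality of `J`. -/
def Jmap {X Y : SSet} (q : X ⟶ Y) : Jmax X ⟶ Jmax Y where
  app m := TypeCat.ofHom fun x => ⟨q.app m x.1, fun f => by
    obtain ⟨g, hg⟩ := x.2 f
    exact ⟨g ≫ q, by
      show q.app _ (g.app _ _) = _
      rw [hg]
      exact NatTrans.naturality_apply q f.op x.1⟩⟩
  naturality m m' g := by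
    ext x
    apply Subtype.ext
    exact NatTrans.naturality_apply q g x.1

/-- The canonical map `k^!(X) ⟶ J(X)`. -/
def kCanJ (X : SSet) : kSh X ⟶ Jmax X where
  app n := TypeCat.ofHom fun g => ⟨g.app n (spineEl n.unop), fun f => by
    refine ⟨Bpi.map f ≫ g, ?_⟩
    exact (congr_arg (g.app _) (spineEl_natural f)).trans
      (NatTrans.naturality_apply g f.op (spineEl n.unop))⟩
  naturality n n' f := by
    ext g
    apply Subtype.ext
    exact (congr_arg (g.app n') (spineEl_natural f.unop)).trans
      (NatTrans.naturality_apply g f (spineEl n.unop))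

/-- Kan fibrations: right lifting property against all horn inclusions. -/
def IsKanFib {X Y : SSet} (q : X ⟶ Y) : Prop :=
  ∀ ⦃n : ℕ⦄ ⦃i : Fin (n + 1)⦄, HasLiftingProperty (SSet.horn n i).ι q

/-- Trivial Kan fibrations: right lifting property against all boundary inclusions. -/
def IsTrivFib {X Y : SSet} (q : X ⟶ Y) : Prop :=
  ∀ ⦃n : ℕ⦄, HasLiftingProperty (SSet.boundary n).ι q

noncomputable section

instance {m : SimplexCategoryᵒᵖ} : Subsingleton (Δ[0].obj m) := by
  constructor
  intro a b
  apply (SSet.stdSimplex.objEquiv).injective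
  ext i
  exact congr_arg Fin.val (Subsingleton.elim (α := Fin 1) _ _)

/-- The unique map to the terminal simplicial set `Δ[0]`. -/
def toPt (X : SSet) : X ⟶ Δ[0] where
  app m := TypeCat.ofHom fun _ => SSet.stdSimplex.objMk (OrderHom.const _ 0)
  naturality _ _ _ := by ext x; apply Subsingleton.elim

lemma toPt_unique {X : SSet} (f g : X ⟶ Δ[0]) : f = g :=
  NatTrans.ext (funext fun m => ConcreteCategory.hom_ext _ _ fun x => Subsingleton.elim _ _)

/-- An interval object: a simplicial set with two chosen endpoints. -/
structure SInterval where
  I : SSet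
  e0 : Δ[0] ⟶ I
  e1 : Δ[0] ⟶ I

/-- Homotopy of maps `X ⟶ Z` with respect to the cylinder `X × I`. -/
def SHtpy (c : SInterval) {X Z : SSet} (u v : X ⟶ Z) : Prop :=
  ∃ H : Limits.prod X c.I ⟶ Z,
    Limits.prod.lift (𝟙 X) (toPt X ≫ c.e0) ≫ H = u ∧
    Limits.prod.lift (𝟙 X) (toPt X ≫ c.e1) ≫ H = v

/-- Homotopy classes of maps `X ⟶ Z`. -/
def hoClasses (c : SInterval) (X Z : SSet) : Type :=
  Quot (SHtpy c (X := X) (Z := Z))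

lemma lift_map_endpoint {X Y I : SSet} (f : X ⟶ Y) (e : Δ[0] ⟶ I) :
    Limits.prod.lift (𝟙 X) (toPt X ≫ e) ≫ Limits.prod.map f (𝟙 I) =
      f ≫ Limits.prod.lift (𝟙 Y) (toPt Y ≫ e) := by
  have h : toPt X = f ≫ toPt Y := toPt_unique _ _
  rw [Limits.prod.lift_map, Limits.prod.comp_lift, h]
  simp

/-- Precomposition on homotopy classes. -/
def hoPrecomp (c : SInterval) {X Y : SSet} (f : X ⟶ Y) (Z : SSet) :
    hoClasses c Y Z → hoClasses c X Z :=
  Quot.map (fun u => f ≫ u) (fun u v h => by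
    obtain ⟨H, h0, h1⟩ := h
    exact ⟨Limits.prod.map f (𝟙 c.I) ≫ H,
      by rw [← Category.assoc, lift_map_endpoint, Category.assoc, h0],
      by rw [← Category.assoc, lift_map_endpoint, Category.assoc, h1]⟩)

/-- The Kan–Quillen interval `Δ¹`. -/
def kanSInterval : SInterval :=
  ⟨Δ[1], SSet.stdSimplex.map (SimplexCategory.δ 1),
    SSet.stdSimplex.map (SimplexCategory.δ 0)⟩

/-- The Joyal interval `E¹ = Bπ(Δ¹)`, the nerve of the free-standing isomorphism. -/
def joyalSInterval : SInterval :=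
  ⟨Bpi.obj (SimplexCategory.mk 1),
    stdToBpi.app (SimplexCategory.mk 0) ≫ Bpi.map (SimplexCategory.δ 1),
    stdToBpi.app (SimplexCategory.mk 0) ≫ Bpi.map (SimplexCategory.δ 0)⟩

/-- Kan complexes, with the horn-filling definition of `SSet.KanComplex` of the older
Mathlib (fillers for all horns `Λ[n, i]`, `n ≥ 0`). -/
def OldKanComplex (S : SSet) : Prop :=
  ∀ ⦃n : ℕ⦄ ⦃i : Fin (n + 1)⦄ (σ₀ : (SSet.horn n i : SSet) ⟶ S),
    ∃ σ : Δ[n] ⟶ S, σ₀ = (SSet.horn n i).ι ≫ σ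

/-- Weak homotopy equivalences (equivalences in the Kan–Quillen model structure),
characterized by homotopy classes of maps into Kan complexes. -/
def IsWeakEquiv {X Y : SSet} (f : X ⟶ Y) : Prop :=
  ∀ Z : SSet, OldKanComplex Z → Function.Bijective (hoPrecomp kanSInterval f Z)

/-- Weak categorical (Joyal) equivalences, characterized by `E¹`-homotopy classes of
maps into quasi-categories. -/
def IsJoyalEquiv {X Y : SSet} (f : X ⟶ Y) : Prop :=
  ∀ Z : SSet, SSet.Quasicategory Z → Function.Bijective (hoPrecomp joyalSInterval f Z)

/-- Fibrations in the Joyal model structure: right lifting property against all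
trivial cofibrations (monomorphisms which are Joyal equivalences). -/
def IsJoyalFib {X Y : SSet} (q : X ⟶ Y) : Prop :=
  ∀ ⦃A B : SSet⦄ (i : A ⟶ B), Mono i → IsJoyalEquiv i → HasLiftingProperty i q

end

/-!
`∂Δᵐ` is glued from its faces `face S` along their pairwise intersections `face (S ∩ T)`,
so the colimit-preserving `k` glues `k(∂Δᵐ)` from the `k(face S) ≅ Bπ(Δ^{|S|-1})` in the
same way. In the nerve `Bπ(Δᵐ)` of the chaotic category, `k(face S)` is the subobject of
simplices with all vertices in `S`, and two of these meet exactly in the one for `S ∩ T`;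
so the gluing maps injectively onto their union.
-/

namespace Bpi

/-- The vertex `y.obj j`, typed in `Fin` (objects of a chaotic category carry no instances). -/
def vertex {a : SimplexCategory} {p : SimplexCategoryᵒᵖ} (y : (Bpi.obj a).obj p)
    (j : Fin (p.unop.len + 1)) : Fin (a.len + 1) :=
  y.obj j

def mkSimplex {a : SimplexCategory} {p : SimplexCategoryᵒᵖ}
    (v : Fin (p.unop.len + 1) → Fin (a.len + 1)) : (Bpi.obj a).obj p where
  obj := v
  map _ := ⟨⟩
  map_id _ := rfl
  map_comp _ _ := rfl

lemma map_app_injective {a b : SimplexCategory} {f : a ⟶ b}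
    (hf : Function.Injective f.toOrderHom) (p : SimplexCategoryᵒᵖ) :
    Function.Injective ((Bpi.map f).app p) := fun _ _ h =>
  chaoticCA_ext _ _ fun j => hf (congrArg (fun z => z.obj j) h)

lemma mem_range_map_app_iff {a b : SimplexCategory} (f : a ⟶ b) {p : SimplexCategoryᵒᵖ}
    (y : (Bpi.obj b).obj p) :
    y ∈ Set.range ((Bpi.map f).app p) ↔ ∀ j, vertex y j ∈ Set.range f.toOrderHom := by
  constructor
  · rintro ⟨z, rfl⟩ j
    exact ⟨z.obj j, rfl⟩
  · intro h
    choose v hv using h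
    exact ⟨mkSimplex v, chaoticCA_ext _ _ hv⟩

end Bpi

open SSet

section

universe u

variable (k : SSet.{u} ⥤ SSet.{0}) (e : SSet.stdSimplex.{u} ⋙ k ≅ Bpi) {m : ℕ}

def subcomplexToBpi (A : (Δ[m] : SSet.{u}).Subcomplex) : k.obj A ⟶ Bpi.obj ⦋m⦌ :=
  k.map A.ι ≫ e.hom.app ⦋m⦌

lemma subcomplexToBpi_app_map_homOfLE_app {A B : (Δ[m] : SSet.{u}).Subcomplex} (h : A ≤ B)
    {p : SimplexCategoryᵒᵖ} (x : (k.obj A).obj p) :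
    (subcomplexToBpi k e B).app p ((k.map (Subcomplex.homOfLE h)).app p x) =
      (subcomplexToBpi k e A).app p x := by
  rw [← NatTrans.comp_app_apply, subcomplexToBpi, ← k.map_comp_assoc, Subcomplex.homOfLE_ι]
  rfl

def faceIsoBpi (S : Finset (Fin (m + 1))) {d : ℕ} (σ : Fin (d + 1) ≃o S) :
    Bpi.obj ⦋d⦌ ≅ k.obj (stdSimplex.face S) :=
  e.symm.app ⦋d⦌ ≪≫ k.mapIso (stdSimplex.isoOfRepresentableBy
    (stdSimplex.faceRepresentableBy S d σ))

lemma faceIsoBpi_hom_comp (S : Finset (Fin (m + 1))) {d : ℕ} (σ : Fin (d + 1) ≃o S) :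
    (faceIsoBpi k e S σ).hom ≫ subcomplexToBpi k e (stdSimplex.face S) =
      Bpi.map (SimplexCategory.mkHom
        ((OrderHom.Subtype.val _).comp σ.toOrderEmbedding.toOrderHom)) := by
  have h : (stdSimplex.isoOfRepresentableBy (stdSimplex.faceRepresentableBy S d σ)).hom ≫
      (stdSimplex.face S).ι = stdSimplex.{u}.map (SimplexCategory.mkHom
        ((OrderHom.Subtype.val _).comp σ.toOrderEmbedding.toOrderHom)) := rfl
  simp only [faceIsoBpi, subcomplexToBpi, Iso.trans_hom, Iso.app_hom, Iso.symm_hom,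
    Functor.mapIso_hom, Category.assoc, ← k.map_comp_assoc, h]
  exact NatIso.naturality_1 e _

lemma exists_subcomplexToBpi_face_eq (S : Finset (Fin (m + 1))) (hS : S.Nonempty) :
    ∃ (d : ℕ) (f : ⦋d⦌ ⟶ ⦋m⦌) (ψ : Bpi.obj ⦋d⦌ ≅ k.obj (stdSimplex.face S)),
      Function.Injective f.toOrderHom ∧ Set.range f.toOrderHom = S ∧
      subcomplexToBpi k e (stdSimplex.face S) = ψ.inv ≫ Bpi.map f := by
  obtain ⟨d, hd⟩ : ∃ d, S.card = d + 1 := ⟨_, (Nat.succ_pred_eq_of_pos hS.card_pos).symm⟩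
  let σ := S.orderIsoOfFin hd
  refine ⟨d, SimplexCategory.mkHom ((OrderHom.Subtype.val _).comp σ.toOrderEmbedding.toOrderHom),
    faceIsoBpi k e S σ, fun a b h => σ.injective (Subtype.ext h), ?_, ?_⟩
  · ext x
    refine ⟨fun ⟨i, hi⟩ => hi ▸ (σ i).2, fun hx => ?_⟩
    obtain ⟨i, hi⟩ := σ.surjective ⟨x, hx⟩
    exact ⟨i, congrArg Subtype.val hi⟩
  · rw [← faceIsoBpi_hom_comp k e S σ, Iso.inv_hom_id_assoc]

lemma subcomplexToBpi_face_app_injective {S : Finset (Fin (m + 1))} (hS : S.Nonempty)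
    (p : SimplexCategoryᵒᵖ) :
    Function.Injective ((subcomplexToBpi k e (stdSimplex.face S)).app p) := by
  obtain ⟨d, f, ψ, hf, -, hψ⟩ := exists_subcomplexToBpi_face_eq k e S hS
  rw [hψ, NatTrans.comp_app]
  exact (Bpi.map_app_injective hf p).comp (ConcreteCategory.bijective_of_isIso (ψ.inv.app p)).1

lemma mem_range_subcomplexToBpi_face_app_iff {S : Finset (Fin (m + 1))} (hS : S.Nonempty)
    {p : SimplexCategoryᵒᵖ} (y : (Bpi.obj ⦋m⦌).obj p) :
    y ∈ Set.range ((subcomplexToBpi k e (stdSimplex.face S)).app p) ↔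
      ∀ j, Bpi.vertex y j ∈ S := by
  obtain ⟨d, f, ψ, -, hfS, hψ⟩ := exists_subcomplexToBpi_face_eq k e S hS
  rw [hψ, NatTrans.comp_app, CategoryTheory.hom_comp,
    (ConcreteCategory.bijective_of_isIso (ψ.inv.app p)).2.range_comp,
    Bpi.mem_range_map_app_iff, hfS]
  rfl

lemma face_multicoequalizerDiagram {ι : Type*} {S : ι → Finset (Fin (m + 1))}
    {A : (Δ[m] : SSet.{u}).Subcomplex} (hA : ⨆ i, stdSimplex.face (S i) = A) :
    Subcomplex.MulticoequalizerDiagram A (fun i => stdSimplex.face (S i))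
      (fun i j => stdSimplex.face (S i ⊓ S j)) where
  iSup_eq := hA
  eq_inf _ _ := (stdSimplex.face_inter_face _ _).symm

variable [PreservesColimits k] {ι : Type} {S : ι → Finset (Fin (m + 1))}
  {A : (Δ[m] : SSet.{u}).Subcomplex}

variable {k} in
lemma exists_map_homOfLE_app_eq (hA : ⨆ i, stdSimplex.face (S i) = A)
    {p : SimplexCategoryᵒᵖ} (x : (k.obj A).obj p) :
    ∃ (i : ι) (a : (k.obj (stdSimplex.face (S i))).obj p),
      (k.map (Subcomplex.homOfLE
        ((le_iSup (fun i => stdSimplex.face (S i)) i).trans hA.le))).app p a = x := by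
  have hc := isColimitOfPreserves ((evaluation _ _).obj p)
    (isColimitOfPreserves k (face_multicoequalizerDiagram hA).isColimit)
  obtain ⟨j, a, rfl⟩ := Types.jointly_surjective_of_isColimit hc x
  rcases j with ⟨i, j⟩ | i
  · refine ⟨i, (k.map (Subcomplex.homOfLE
      ((stdSimplex.face_le_face_iff _ _).2 inf_le_left))).app p a,
      (NatTrans.comp_app_apply _ _ _ _).symm.trans ?_⟩
    rw [← k.map_comp, Subcomplex.homOfLE_comp]
    rfl
  · exact ⟨i, a, rfl⟩

lemma mem_range_subcomplexToBpi_app_iff (hS : ∀ i, (S i).Nonempty)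
    (hA : ⨆ i, stdSimplex.face (S i) = A) {p : SimplexCategoryᵒᵖ} (y : (Bpi.obj ⦋m⦌).obj p) :
    y ∈ Set.range ((subcomplexToBpi k e A).app p) ↔ ∃ i, ∀ j, Bpi.vertex y j ∈ S i := by
  constructor
  · rintro ⟨x, rfl⟩
    obtain ⟨i, a, rfl⟩ := exists_map_homOfLE_app_eq hA x
    exact ⟨i, (mem_range_subcomplexToBpi_face_app_iff k e (hS i) _).1
      ⟨a, (subcomplexToBpi_app_map_homOfLE_app k e _ a).symm⟩⟩
  · rintro ⟨i, hi⟩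
    obtain ⟨a, rfl⟩ := (mem_range_subcomplexToBpi_face_app_iff k e (hS i) y).2 hi
    exact ⟨_, subcomplexToBpi_app_map_homOfLE_app k e
      ((le_iSup (fun i => stdSimplex.face (S i)) i).trans hA.le) a⟩

lemma subcomplexToBpi_app_injective (hS : ∀ i, (S i).Nonempty)
    (hA : ⨆ i, stdSimplex.face (S i) = A) (p : SimplexCategoryᵒᵖ) :
    Function.Injective ((subcomplexToBpi k e A).app p) := by
  intro x x' hxx'
  obtain ⟨i, a, rfl⟩ := exists_map_homOfLE_app_eq hA x
  obtain ⟨j, b, rfl⟩ := exists_map_homOfLE_app_eq hA x'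
  rw [subcomplexToBpi_app_map_homOfLE_app, subcomplexToBpi_app_map_homOfLE_app] at hxx'
  set y := (subcomplexToBpi k e _).app p a
  have hyi : ∀ l, Bpi.vertex y l ∈ S i :=
    (mem_range_subcomplexToBpi_face_app_iff k e (hS i) y).1 ⟨a, rfl⟩
  have hyj : ∀ l, Bpi.vertex y l ∈ S j :=
    (mem_range_subcomplexToBpi_face_app_iff k e (hS j) y).1 ⟨b, hxx'.symm⟩
  have hyij : ∀ l, Bpi.vertex y l ∈ S i ⊓ S j := fun l =>
    Finset.mem_inter_of_mem (hyi l) (hyj l)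
  obtain ⟨c, hc⟩ :=
    (mem_range_subcomplexToBpi_face_app_iff k e ⟨Bpi.vertex y 0, hyij 0⟩ y).2 hyij
  have hca : (k.map (Subcomplex.homOfLE
      ((stdSimplex.face_le_face_iff _ _).2 inf_le_left))).app p c = a :=
    subcomplexToBpi_face_app_injective k e (hS i) p
      (by rw [subcomplexToBpi_app_map_homOfLE_app, hc])
  have hcb : (k.map (Subcomplex.homOfLE
      ((stdSimplex.face_le_face_iff _ _).2 inf_le_right))).app p c = b :=
    subcomplexToBpi_face_app_injective k e (hS j) p
      (by rw [subcomplexToBpi_app_map_homOfLE_app, hc, hxx'])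
  rw [← hca, ← hcb, ← ConcreteCategory.comp_apply, ← ConcreteCategory.comp_apply,
    ← NatTrans.comp_app, ← NatTrans.comp_app, ← k.map_comp, ← k.map_comp,
    Subcomplex.homOfLE_comp, Subcomplex.homOfLE_comp]

lemma mono_subcomplexToBpi (hS : ∀ i, (S i).Nonempty) (hA : ⨆ i, stdSimplex.face (S i) = A) :
    Mono (subcomplexToBpi k e A) := by
  have (p : SimplexCategoryᵒᵖ) : Mono ((subcomplexToBpi k e A).app p) :=
    (mono_iff_injective _).2 (subcomplexToBpi_app_injective k e hS hA p)
  exact NatTrans.mono_of_mono_app _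

end

/-- For `n ≥ 1`, the induced map `k₁(∂Δⁿ) ⟶ k₁(Δⁿ) = Bπ(Δⁿ)` is a monomorphism,
and `k₁(∂Δⁿ)` is the union of the images of the maps `Bπ(Δⁿ⁻¹) → Bπ(Δⁿ)` induced
by the coface maps `dⁱ`. -/
theorem kBang_boundary (k : SSet ⥤ SSet) (hk : Limits.PreservesColimits k)
    (e : SSet.stdSimplex ⋙ k ≅ Bpi) (n : ℕ) :
    Mono (k.map (SSet.boundary (n + 1)).ι ≫ e.hom.app (SimplexCategory.mk (n + 1))) ∧
    (∀ (p : SimplexCategoryᵒᵖ) (y : (Bpi.obj (SimplexCategory.mk (n + 1))).obj p),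
      (∃ x, (k.map (SSet.boundary (n + 1)).ι ≫
          e.hom.app (SimplexCategory.mk (n + 1))).app p x = y) ↔
      (∃ (i : Fin (n + 2)) (z : (Bpi.obj (SimplexCategory.mk n)).obj p),
        (Bpi.map (SimplexCategory.δ i)).app p z = y)) := by
  have hA : ⨆ i : Fin (n + 2), stdSimplex.face {i}ᶜ = ∂Δ[n + 1] := (boundary_eq_iSup _).symm
  have hS (i : Fin (n + 2)) : ({i}ᶜ : Finset _).Nonempty :=
    ⟨i.succAbove 0, by simp [Fin.succAbove_ne]⟩
  refine ⟨mono_subcomplexToBpi k e hS hA, fun p y => ?_⟩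
  change y ∈ Set.range ((subcomplexToBpi k e _).app p) ↔ _
  rw [mem_range_subcomplexToBpi_app_iff k e hS hA]
  refine exists_congr fun i => ?_
  rw [← Set.mem_range, Bpi.mem_range_map_app_iff]
  simp [SimplexCategory.δ]
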